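/- arXiv:2502.06762 — 2 statements merged into one kernel-verified Lean document; each statement's English description precedes it below -/
import Mathlib

section
/- Let M be a finite commutative completely regular monoid. Then there exists L ∈ ℕ such that for all n ≥ L and all subsets R ⊆ M, [R]^{⊗n} = R^{⊗n}, where [R] = R ⊗ ⟨R⁻¹ ⊗ R⟩ is the coset generated by R. -/
open Pointwise

/-- `T` is a subgroup of a semigroup/monoid (as a subset). -/
def IsSubgroupSet {S : Type*} [Mul S] (T : Set S) : Prop :=
  (∀ a ∈ T, ∀ b ∈ T, a * b ∈ T) ∧
  ∃ e ∈ T, (∀ a ∈ T, e * a = a ∧ a * e = a) ∧ (∀ a ∈ T, ∃ b ∈ T, a * b = e ∧ b * a = e)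

/-- An element belongs to a subgroup of the monoid. -/
def MemSubgroup {M : Type*} [Monoid M] (a : M) : Prop :=
  ∃ T : Set M, IsSubgroupSet T ∧ a ∈ T

/-- The set of group inverses of the elements of `U`: `b` is the inverse of a (completely
regular) element `a` when `ab = ba`, `a²b = a` and `b²a = b`. -/
def InvSet {M : Type*} [Monoid M] (U : Set M) : Set M :=
  {b | ∃ a ∈ U, a * b = b * a ∧ a * a * b = a ∧ b * b * a = b}

/-- The coset generated by `R`: `[R] = R ⊗ ⟨R⁻¹ ⊗ R⟩`. -/
def CosetGen {M : Type*} [Monoid M] (R : Set M) : Set M :=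
  R * (Submonoid.closure (InvSet R * R) : Set M)

section Aux

variable {M : Type*} [CommMonoid M]

/-- `a^{k+1} b^k = a` when `ab = e` is an identity for `a`. -/
lemma aux_pow_cancel {a b e : M} (hab : a * b = e) (hea : e * a = a) :
    ∀ k : ℕ, a ^ (k + 1) * b ^ k = a := by
  intro k
  induction k with
  | zero => simp
  | succ k ih =>
    have : a ^ (k + 1 + 1) * b ^ (k + 1) = (a * b) * (a ^ (k + 1) * b ^ k) := by
      rw [pow_succ a (k + 1), pow_succ b k]
      ac_rfl
    rw [this, ih, hab, hea]

/-- Every completely regular element of a finite commutative monoid satisfies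
`a^{p+1} = a` for some `p ≥ 1`. -/
lemma exists_period [Finite M] {a : M} (ha : MemSubgroup a) :
    ∃ p : ℕ, 1 ≤ p ∧ a ^ (p + 1) = a := by
  obtain ⟨T, ⟨_, e, heT, hid, hinv⟩, haT⟩ := ha
  obtain ⟨b, _, hab, _⟩ := hinv a haT
  obtain ⟨i, j, hne, hij⟩ := Finite.exists_ne_map_eq_of_infinite (fun n : ℕ => a ^ (n + 1))
  wlog hlt : i < j generalizing i j
  · exact this j i hne.symm hij.symm (by omega)
  refine ⟨j - i, by omega, ?_⟩
  have key : a ^ (i + 1) * b ^ i = a := aux_pow_cancel hab (hid a haT).1 i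
  have : a ^ (j + 1) * b ^ i = a ^ (j - i) * (a ^ (i + 1) * b ^ i) := by
    rw [← mul_assoc, ← pow_add]
    congr 2
    omega
  rw [key] at this
  rw [pow_succ, ← this, ← hij]
  exact key

/-- Iterate a period. -/
lemma pow_period {a : M} {p : ℕ} (h : a ^ (p + 1) = a) (m : ℕ) : a ^ (p * m + 1) = a := by
  induction m with
  | zero => simp
  | succ m ih =>
    have : a ^ (p * (m + 1) + 1) = a ^ (p * m + 1) * a ^ p := by
      rw [← pow_add]; congr 1; ring
    rw [this, ih, ← pow_succ']
    exact h

/-- A global exponent `K ≥ 2` with `a^{K+1} = a` for all `a`. -/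
lemma exists_global_period [Finite M] (hreg : ∀ a : M, MemSubgroup a) :
    ∃ K : ℕ, 2 ≤ K ∧ ∀ a : M, a ^ (K + 1) = a := by
  cases nonempty_fintype M
  choose p hp1 hp using fun a : M => exists_period (hreg a)
  refine ⟨2 * ∏ a : M, p a, ?_, ?_⟩
  · have : 1 ≤ ∏ a : M, p a := Finset.one_le_prod' fun a _ => hp1 a
    omega
  · intro a
    have hdvd : p a ∣ 2 * ∏ a : M, p a :=
      Dvd.dvd.mul_left (Finset.dvd_prod_of_mem p (Finset.mem_univ a)) 2
    obtain ⟨m, hm⟩ := hdvd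
    rw [hm]
    exact pow_period (hp a) m

/-- The group inverse equals `a^{K-1}`. -/
lemma inv_eq_pow {K : ℕ} (hK : 2 ≤ K) (hKper : ∀ a : M, a ^ (K + 1) = a)
    {a b : M} (h2 : a * a * b = a) (h3 : b * b * a = b) : b = a ^ (K - 1) := by
  have hae : a * (a * b) = a := by rw [← mul_assoc]; exact h2
  -- b = b^{1+m} a^m
  have hb : ∀ m : ℕ, b ^ (m + 1) * a ^ m = b := by
    intro m
    induction m with
    | zero => simp
    | succ m ih =>
      have : b ^ (m + 1 + 1) * a ^ (m + 1) = (b * b * a) * (b ^ m * a ^ m) := by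
        rw [pow_succ b (m + 1), pow_succ b m, pow_succ a m]
        ac_rfl
      rw [this, h3, ← mul_assoc, show b * b ^ m = b ^ (m + 1) by rw [pow_succ, mul_comm], ih]
  -- b = b * a^K
  have hbaK : b * a ^ K = b := by
    have := hb K
    rwa [show b ^ (K + 1) * a ^ K = b ^ (K + 1) * a ^ K from rfl, hKper b] at this
  have h1 : a ^ (K - 1) = a ^ (K - 1) * (a * b) := by
    have : a ^ (K - 1) = a ^ (K - 2) * a := by
      rw [← pow_succ]; congr 1; omega
    rw [this, mul_assoc, hae]
  have h2' : a ^ (K - 1) * (a * b) = a ^ K * b := by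
    rw [← mul_assoc, ← pow_succ]
    congr 2
    omega
  rw [h1, h2', mul_comm, hbaK]

/-- Multiset characterization of membership in `R ^ n`. -/
lemma mem_pow_iff_multiset {R : Set M} {n : ℕ} {x : M} :
    x ∈ R ^ n ↔ ∃ s : Multiset M, Multiset.card s = n ∧ (∀ y ∈ s, y ∈ R) ∧ s.prod = x := by
  induction n generalizing x with
  | zero =>
    simp only [pow_zero, Set.mem_one]
    constructor
    · rintro rfl; exact ⟨0, rfl, by simp, by simp⟩
    · rintro ⟨s, hc, _, hp⟩
      rw [Multiset.card_eq_zero] at hc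
      rw [hc] at hp
      simpa using hp.symm
  | succ n ih =>
    rw [pow_succ, Set.mem_mul]
    constructor
    · rintro ⟨y, hy, z, hz, rfl⟩
      obtain ⟨s, hc, hmem, hp⟩ := ih.mp hy
      exact ⟨z ::ₘ s, by simp [hc], by
        intro w hw
        rcases Multiset.mem_cons.mp hw with rfl | hw
        · exact hz
        · exact hmem w hw, by rw [Multiset.prod_cons, hp, mul_comm]⟩
    · rintro ⟨s, hc, hmem, rfl⟩
      have hne : s ≠ 0 := by
        intro h; rw [h] at hc; simp at hc
      obtain ⟨z, hz⟩ := Multiset.exists_mem_of_ne_zero hne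
      obtain ⟨t, rfl⟩ := Multiset.exists_cons_of_mem hz
      refine ⟨t.prod, ih.mpr ⟨t, ?_, ?_, rfl⟩, z, hmem z (Multiset.mem_cons_self z t), ?_⟩
      · simpa using hc
      · exact fun y hy => hmem y (Multiset.mem_cons_of_mem hy)
      · rw [Multiset.prod_cons, mul_comm]

/-- Shrinking step: `R^{n+K} ⊆ R^n` for `n > K * (card M) - K`, i.e. `K * card M ≤ n`. -/
lemma pow_add_K_subset [Fintype M] {K : ℕ} (hK : 1 ≤ K) (hKper : ∀ a : M, a ^ (K + 1) = a)
    {n : ℕ} (hn : K * Fintype.card M ≤ n) (R : Set M) : R ^ (n + K) ⊆ R ^ n := by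
  classical
  intro x hx
  obtain ⟨s, hc, hmem, hp⟩ := mem_pow_iff_multiset.mp hx
  -- pigeonhole: some element occurs at least K+1 times
  have hbig : ∃ t : M, K + 1 ≤ s.count t := by
    by_contra hcon
    push_neg at hcon
    have : Multiset.card s ≤ K * Fintype.card M := by
      rw [← Multiset.toFinset_sum_count_eq]
      calc ∑ a ∈ s.toFinset, s.count a ≤ ∑ _a ∈ s.toFinset, K :=
            Finset.sum_le_sum fun a _ => Nat.lt_succ_iff.mp (hcon a)
        _ = s.toFinset.card * K := by rw [Finset.sum_const, smul_eq_mul]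
        _ ≤ Fintype.card M * K := Nat.mul_le_mul_right K (Finset.card_le_univ _)
        _ = K * Fintype.card M := Nat.mul_comm _ _
    omega
  obtain ⟨t, ht⟩ := hbig
  have hrep : Multiset.replicate (K + 1) t ≤ s := Multiset.le_count_iff_replicate_le.mp ht
  set u := s - Multiset.replicate (K + 1) t with hu
  have hsu : u + Multiset.replicate (K + 1) t = s := tsub_add_cancel_of_le hrep
  have htR : t ∈ R := hmem t (Multiset.mem_of_le hrep (Multiset.mem_replicate.mpr ⟨by omega, rfl⟩))
  refine mem_pow_iff_multiset.mpr ⟨t ::ₘ u, ?_, ?_, ?_⟩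
  · have := congrArg Multiset.card hsu
    rw [Multiset.card_add, Multiset.card_replicate, hc] at this
    simp only [Multiset.card_cons]
    omega
  · intro y hy
    rcases Multiset.mem_cons.mp hy with rfl | hy
    · exact htR
    · exact hmem y (Multiset.mem_of_le (hsu ▸ Multiset.le_add_right u _) hy)
  · have : s.prod = u.prod * t ^ (K + 1) := by
      rw [← hsu, Multiset.prod_add, Multiset.prod_replicate]
    rw [Multiset.prod_cons, ← hp, this, hKper t, mul_comm]

lemma coe_closure_pow_subset {S : Set M} :
    ∀ n : ℕ, (Submonoid.closure S : Set M) ^ n ⊆ (Submonoid.closure S : Set M) := by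
  intro n
  induction n with
  | zero =>
    rw [pow_zero]
    intro x hx
    rw [Set.mem_one] at hx
    rw [hx]
    exact Submonoid.one_mem _
  | succ n ih =>
    rw [pow_succ]
    intro x hx
    obtain ⟨y, hy, z, hz, rfl⟩ := Set.mem_mul.mp hx
    exact Submonoid.mul_mem _ (ih hy) hz

lemma closure_mem_pow {K : ℕ} (hK2 : 2 ≤ K) (hKper : ∀ a : M, a ^ (K + 1) = a)
    (R : Set M) {c : M} (hcC : c ∈ Submonoid.closure (InvSet R * R)) :
    ∃ m : ℕ, c ∈ R ^ (K * m) := by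
  induction hcC using Submonoid.closure_induction with
  | mem g hg =>
    obtain ⟨b, hb, r, hr, rfl⟩ := Set.mem_mul.mp hg
    obtain ⟨a, ha, _, h2, h3⟩ := hb
    refine ⟨1, ?_⟩
    have hba : b = a ^ (K - 1) := inv_eq_pow hK2 hKper h2 h3
    have : b * r ∈ R ^ (K - 1) * R ^ 1 := by
      rw [hba]
      exact Set.mul_mem_mul (Set.pow_mem_pow ha) (by rwa [pow_one])
    rwa [← pow_add, show K - 1 + 1 = K * 1 by omega] at this
  | one => exact ⟨0, by simp⟩
  | mul g h _ _ hg hh =>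
    obtain ⟨m1, hm1⟩ := hg
    obtain ⟨m2, hm2⟩ := hh
    refine ⟨m1 + m2, ?_⟩
    rw [Nat.mul_add, pow_add]
    exact Set.mul_mem_mul hm1 hm2

end Aux

theorem cosetGen_pow_eq_pow {M : Type*} [CommMonoid M] [Finite M]
    (hreg : ∀ a : M, MemSubgroup a) :
    ∃ L : ℕ, 1 ≤ L ∧ ∀ n : ℕ, L ≤ n → ∀ R : Set M, (CosetGen R) ^ n = R ^ n := by
  cases nonempty_fintype M
  obtain ⟨K, hK2, hKper⟩ := exists_global_period hreg
  have hK1 : 1 ≤ K := by omega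
  have hcard : 1 ≤ Fintype.card M := Fintype.card_pos
  refine ⟨K * Fintype.card M, by nlinarith, ?_⟩
  intro n hn R
  -- shrink lemma iterated
  have shrink : ∀ m : ℕ, R ^ (n + K * m) ⊆ R ^ n := by
    intro m
    induction m with
    | zero => simp
    | succ m ih =>
      have h1 : R ^ (n + K * (m + 1)) = R ^ ((n + K * m) + K) := by ring_nf
      rw [h1]
      exact (pow_add_K_subset hK1 hKper (le_trans hn (Nat.le_add_right _ _)) R).trans ih
  apply Set.Subset.antisymm
  · -- (CosetGen R)^n ⊆ R^n
    intro x hx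
    rw [CosetGen, mul_pow] at hx
    obtain ⟨y, hy, c, hc, rfl⟩ := Set.mem_mul.mp hx
    have hcC : c ∈ Submonoid.closure (InvSet R * R) := coe_closure_pow_subset n hc
    obtain ⟨m, hm⟩ := closure_mem_pow hK2 hKper R hcC
    have : y * c ∈ R ^ (n + K * m) := by
      rw [pow_add]
      exact Set.mul_mem_mul hy hm
    exact shrink m this
  · -- R^n ⊆ (CosetGen R)^n
    apply Set.pow_subset_pow_left
    intro r hr
    exact Set.mem_mul.mpr ⟨r, hr, 1, Submonoid.one_mem _, mul_one r⟩
end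

section
/- Let M be a finite commutative monoid. Then there exists K ∈ ℕ such that for all n ≥ K and all subsets R ⊆ M, [R†]^{⊗n} ⊆ R^{⊗n}, where R† = {a·d_a : a ∈ R} and d_a is the unique idempotent positive power of a. -/
open Pointwise

/-- The regularization `R† = {a · d_a : a ∈ R}`, where `d_a` is the unique idempotent
positive power of `a`. -/
def Dagger {M : Type*} [Monoid M] (R : Set M) : Set M :=
  {x | ∃ a ∈ R, ∃ n : ℕ, 0 < n ∧ a ^ n * a ^ n = a ^ n ∧ x = a * a ^ n}

section Aux

variable {M : Type*} [CommMonoid M]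

private lemma idem_pow {e : M} (he : e * e = e) : ∀ c : ℕ, e ^ (c + 1) = e := by
  intro c
  induction c with
  | zero => simp
  | succ k ih => rw [pow_succ, ih, he]

private lemma exists_idem_pow [Finite M] (a : M) : ∃ k, 0 < k ∧ a ^ k * a ^ k = a ^ k := by
  obtain ⟨i, j, hne, hij⟩ := Finite.exists_ne_map_eq_of_infinite (fun n : ℕ => a ^ n)
  wlog hlt : i < j generalizing i j
  · exact this j i hne.symm hij.symm (by omega)
  set p := j - i with hp
  have hp1 : 0 < p := by omega
  have hstep : ∀ m, i ≤ m → a ^ (m + p) = a ^ m := by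
    intro m hm
    have : a ^ (m + p) = a ^ (m - i) * a ^ (i + p) := by
      rw [← pow_add]; congr 1; omega
    rw [this, show i + p = j by omega, ← hij, ← pow_add, show m - i + i = m by omega]
  have hiter : ∀ t m, i ≤ m → a ^ (m + t * p) = a ^ m := by
    intro t
    induction t with
    | zero => simp
    | succ k ih =>
      intro m hm
      have : m + (k+1) * p = (m + k * p) + p := by ring
      rw [this, hstep _ (by omega), ih m hm]
  refine ⟨(i + 1) * p, by positivity, ?_⟩
  rw [← pow_add]
  exact hiter (i+1) ((i+1)*p) (by nlinarith)

private lemma exists_omega (M : Type*) [CommMonoid M] [Finite M] :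
    ∃ ω, 0 < ω ∧ ∀ a : M, a ^ ω * a ^ ω = a ^ ω := by
  cases nonempty_fintype M
  choose k hk hkid using fun a : M => exists_idem_pow a
  refine ⟨∏ a : M, k a, Finset.prod_pos (fun a _ => hk a), fun a => ?_⟩
  obtain ⟨c, hc⟩ := Finset.dvd_prod_of_mem k (Finset.mem_univ a)
  have hc1 : 0 < c := by
    rcases Nat.eq_zero_or_pos c with h | h
    · exfalso
      have h2 := Finset.prod_pos (fun b (_ : b ∈ Finset.univ) => hk b)
      rw [hc, h, mul_zero] at h2
      exact lt_irrefl 0 h2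
    · exact h
  rw [hc, pow_mul]
  obtain ⟨c', rfl⟩ : ∃ c', c = c' + 1 := ⟨c - 1, by omega⟩
  rw [idem_pow (hkid a) c']
  exact hkid a

/-- uniqueness of idempotent powers -/
private lemma idem_pow_eq {a : M} {m k : ℕ} (hm : 0 < m) (hk : 0 < k)
    (him : a ^ m * a ^ m = a ^ m) (hik : a ^ k * a ^ k = a ^ k) : a ^ m = a ^ k := by
  obtain ⟨m', rfl⟩ : ∃ m', m = m' + 1 := ⟨m - 1, by omega⟩
  obtain ⟨k', rfl⟩ : ∃ k', k = k' + 1 := ⟨k - 1, by omega⟩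
  have h1 : a ^ ((m' + 1) * (k' + 1)) = a ^ (m' + 1) := by
    rw [pow_mul, idem_pow him k']
  have h2 : a ^ ((m' + 1) * (k' + 1)) = a ^ (k' + 1) := by
    rw [mul_comm, pow_mul, idem_pow hik m']
  rw [← h1, h2]

/-- the group inverse of a completely regular element is an explicit power -/
private lemma inv_eq_pow_s15 {a b : M} {w : ℕ} (hid : a ^ (w + 1) * a ^ (w + 1) = a ^ (w + 1))
    (h1 : a * a * b = a) (h2 : b * b * a = b) : b = a ^ (2 * w + 1) := by
  set e := a * b with he_def
  have he : e * e = e := by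
    have : (a * b) * (a * b) = (a * a * b) * b := by ac_rfl
    rw [he_def, this, h1]
  have hae : a * e = a := by rw [he_def, ← mul_assoc, h1]
  have hbe : b * e = b := by
    rw [he_def, show b * (a * b) = b * b * a by ac_rfl, h2]
  have haek : a ^ (w + 1) * e = a ^ (w + 1) := by
    rw [pow_succ, mul_assoc, hae]
  have heab : e = a ^ (w + 1) * b ^ (w + 1) := by
    rw [← mul_pow, ← he_def, idem_pow he w]
  have hea : e * a ^ (w + 1) = e := by
    rw [heab,
      show a ^ (w+1) * b ^ (w+1) * a ^ (w+1) = (a ^ (w+1) * a ^ (w+1)) * b ^ (w+1) by ac_rfl,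
      hid]
  have key : a ^ (w + 1) = e := by
    rw [← haek, mul_comm, hea]
  calc b = b * e := hbe.symm
    _ = b * a ^ (w + 1) := by rw [key]
    _ = (b * a) * a ^ w := by rw [pow_succ]; ac_rfl
    _ = e * a ^ w := by rw [he_def, mul_comm a b]
    _ = a ^ (w + 1) * a ^ w := by rw [key]
    _ = a ^ (2 * w + 1) := by rw [← pow_add]; ring_nf

/-- elements of `Dagger R` are explicit powers of elements of `R` -/
private lemma dagger_eq {R : Set M} {ω : ℕ} (hω : 0 < ω)
    (hid : ∀ a : M, a ^ ω * a ^ ω = a ^ ω)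
    {x : M} (hx : x ∈ Dagger R) : ∃ v ∈ R, x = v ^ (ω + 1) := by
  obtain ⟨v, hv, m, hm, him, rfl⟩ := hx
  refine ⟨v, hv, ?_⟩
  rw [idem_pow_eq hm hω him (hid v), pow_succ, mul_comm]

/-- elements of `InvSet (Dagger R)` are explicit powers of elements of `R` -/
private lemma invSet_dagger_eq {R : Set M} {ω : ℕ} (hω : 0 < ω)
    (hid : ∀ a : M, a ^ ω * a ^ ω = a ^ ω)
    {b : M} (hb : b ∈ InvSet (Dagger R)) :
    ∃ v ∈ R, b = v ^ ((ω + 1) * (2 * (ω - 1) + 1)) := by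
  obtain ⟨t, ht, _, h1, h2⟩ := hb
  obtain ⟨v, hv, rfl⟩ := dagger_eq hω hid ht
  obtain ⟨w, rfl⟩ : ∃ w, ω = w + 1 := ⟨ω - 1, by omega⟩
  have hidt : (v ^ (w + 1 + 1)) ^ (w + 1) * (v ^ (w + 1 + 1)) ^ (w + 1)
      = (v ^ (w + 1 + 1)) ^ (w + 1) := hid (v ^ (w + 1 + 1))
  have := inv_eq_pow_s15 hidt h1 h2
  refine ⟨v, hv, ?_⟩
  rw [this, ← pow_mul]
  congr 2

/-- every element of `CosetGen (Dagger R)` lies in some power `R ^ (1 + d·ω)` -/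
private lemma cosetGen_mem {R : Set M} {ω : ℕ} (hω : 0 < ω)
    (hid : ∀ a : M, a ^ ω * a ^ ω = a ^ ω)
    {y : M} (hy : y ∈ CosetGen (Dagger R)) : ∃ d : ℕ, y ∈ R ^ (1 + d * ω) := by
  obtain ⟨s, hs, q, hq, rfl⟩ := Set.mem_mul.1 hy
  obtain ⟨v, hv, rfl⟩ := dagger_eq hω hid hs
  have hgen : ∀ g ∈ InvSet (Dagger R) * Dagger R, g ∈ R ^ (2 * ω * (ω + 1)) := by
    intro g hg
    obtain ⟨b, hb, c, hc, rfl⟩ := Set.mem_mul.1 hg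
    obtain ⟨u, hu, rfl⟩ := invSet_dagger_eq hω hid hb
    obtain ⟨u', hu', rfl⟩ := dagger_eq hω hid hc
    have hmem : u ^ ((ω + 1) * (2 * (ω - 1) + 1)) * u' ^ (ω + 1)
        ∈ R ^ ((ω + 1) * (2 * (ω - 1) + 1)) * R ^ (ω + 1) :=
      Set.mul_mem_mul (Set.pow_mem_pow hu) (Set.pow_mem_pow hu')
    rw [← pow_add] at hmem
    have hexp : (ω + 1) * (2 * (ω - 1) + 1) + (ω + 1) = 2 * ω * (ω + 1) := by
      obtain ⟨w, rfl⟩ : ∃ w, ω = w + 1 := ⟨ω - 1, by omega⟩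
      simp only [Nat.add_sub_cancel]
      ring
    rwa [hexp] at hmem
  clear hy
  have hcl : ∃ j : ℕ, q ∈ R ^ (2 * ω * (ω + 1) * j) := by
    induction hq using Submonoid.closure_induction with
    | mem g hg => exact ⟨1, by rw [mul_one]; exact hgen g hg⟩
    | one => exact ⟨0, by rw [mul_zero, pow_zero]; exact Set.mem_one.2 rfl⟩
    | mul x y hx' hy' ihx ihy =>
      obtain ⟨j1, hj1⟩ := ihx
      obtain ⟨j2, hj2⟩ := ihy
      exact ⟨j1 + j2, by rw [mul_add, pow_add]; exact Set.mul_mem_mul hj1 hj2⟩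
  obtain ⟨j, hj⟩ := hcl
  refine ⟨1 + 2 * (ω + 1) * j, ?_⟩
  have hmem : v ^ (ω + 1) * q ∈ R ^ (ω + 1) * R ^ (2 * ω * (ω + 1) * j) :=
    Set.mul_mem_mul (Set.pow_mem_pow hv) hj
  rw [← pow_add] at hmem
  have hexp : (ω + 1) + 2 * ω * (ω + 1) * j = 1 + (1 + 2 * (ω + 1) * j) * ω := by ring
  rwa [hexp] at hmem

/-- every element of `(CosetGen (Dagger R)) ^ n` lies in some power `R ^ (n + d·ω)` -/
private lemma cosetGen_pow_mem {R : Set M} {ω : ℕ} (hω : 0 < ω)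
    (hid : ∀ a : M, a ^ ω * a ^ ω = a ^ ω) :
    ∀ n : ℕ, ∀ x ∈ (CosetGen (Dagger R)) ^ n, ∃ d : ℕ, x ∈ R ^ (n + d * ω) := by
  intro n
  induction n with
  | zero => exact fun x hx => ⟨0, by simpa using hx⟩
  | succ k ih =>
    intro x hx
    rw [pow_succ] at hx
    obtain ⟨x', hx', y, hy, rfl⟩ := Set.mem_mul.1 hx
    obtain ⟨d1, hd1⟩ := ih x' hx'
    obtain ⟨d2, hd2⟩ := cosetGen_mem hω hid hy
    refine ⟨d1 + d2, ?_⟩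
    have hmem : x' * y ∈ R ^ (k + d1 * ω) * R ^ (1 + d2 * ω) := Set.mul_mem_mul hd1 hd2
    rw [← pow_add] at hmem
    have hexp : (k + d1 * ω) + (1 + d2 * ω) = (k + 1) + (d1 + d2) * ω := by ring
    rwa [hexp] at hmem

variable [Finite M]

private lemma pow_subset_pow_add {R : Set M} {ω : ℕ} (hω : 0 < ω)
    (hid : ∀ a : M, a ^ ω * a ^ ω = a ^ ω)
    {m : ℕ} (hm : Nat.card M * ω ≤ m) : R ^ m ⊆ R ^ (m + ω) := by
  classical
  cases nonempty_fintype M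
  obtain ⟨w, rfl⟩ : ∃ w, ω = w + 1 := ⟨ω - 1, by omega⟩
  intro x hx
  obtain ⟨f, hf⟩ := Set.mem_pow.1 hx
  have hprod : x = ∏ i : Fin m, (f i : M) := by
    rw [← hf, List.prod_ofFn]
  have hcard : Fintype.card M * w < Fintype.card (Fin m) := by
    have h1 : 0 < Fintype.card M := Fintype.card_pos
    have h2 : Nat.card M = Fintype.card M := Nat.card_eq_fintype_card
    rw [h2] at hm
    simp only [Fintype.card_fin]
    nlinarith
  obtain ⟨r, hr⟩ := Fintype.exists_lt_card_fiber_of_mul_lt_card (fun i => (f i : M)) hcard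
  set F := Finset.filter (fun i => (f i : M) = r) Finset.univ with hF
  have hFcard : w + 1 ≤ F.card := by omega
  have hFne : F.Nonempty := Finset.card_pos.1 (by omega)
  obtain ⟨i₀, hi₀⟩ := hFne
  have hrR : r ∈ R := by
    have := (Finset.mem_filter.1 hi₀).2
    rw [← this]; exact (f i₀).2
  have hsplit : x = r ^ F.card * ∏ i ∈ Finset.filter (fun i => ¬((f i : M) = r)) Finset.univ,
      (f i : M) := by
    rw [hprod, ← Finset.prod_filter_mul_prod_filter_not Finset.univ (fun i => (f i : M) = r)]
    congr 1
    rw [Finset.prod_congr rfl (fun i hi => (Finset.mem_filter.1 hi).2), Finset.prod_const]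
  set z := ∏ i ∈ Finset.filter (fun i => ¬((f i : M) = r)) Finset.univ, (f i : M) with hz
  have habs : x * r ^ (w + 1) = x := by
    obtain ⟨d, hd⟩ : ∃ d, F.card = (w + 1) + d := ⟨F.card - (w + 1), by omega⟩
    rw [hsplit, hd]
    calc r ^ (w + 1 + d) * z * r ^ (w + 1)
        = (r ^ (w + 1) * r ^ (w + 1)) * (r ^ d * z) := by
          simp [pow_add, pow_succ, mul_comm, mul_assoc, mul_left_comm]
      _ = r ^ (w + 1) * (r ^ d * z) := by rw [hid r]
      _ = r ^ (w + 1 + d) * z := by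
          simp [pow_add, pow_succ, mul_comm, mul_assoc, mul_left_comm]
  rw [← habs, pow_add]
  exact Set.mul_mem_mul hx (Set.pow_mem_pow hrR)

private lemma pow_stab {R : Set M} {ω : ℕ} (hω : 0 < ω)
    (hid : ∀ a : M, a ^ ω * a ^ ω = a ^ ω)
    {m : ℕ} (hm : Nat.card M * ω + (Nat.card M + 1) * ω ≤ m) : R ^ (m + ω) = R ^ m := by
  set c := Nat.card M with hc
  obtain ⟨m₀, hm₀, rfl⟩ : ∃ m₀, c * ω ≤ m₀ ∧ m₀ + (c + 1) * ω = m := by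
    refine ⟨m - (c + 1) * ω, by omega, by omega⟩
  set S : ℕ → Set M := fun j => R ^ (m₀ + j * ω) with hS
  have hmono : ∀ j, S j ⊆ S (j + 1) := by
    intro j
    have : m₀ + (j + 1) * ω = (m₀ + j * ω) + ω := by ring
    rw [hS]
    simp only
    rw [this]
    exact pow_subset_pow_add hω hid (le_trans hm₀ (Nat.le_add_right _ _))
  have hstep : ∀ j, S (j + 1) = S j * R ^ ω := by
    intro j
    have : m₀ + (j + 1) * ω = (m₀ + j * ω) + ω := by ring
    rw [hS]; simp only; rw [this, pow_add]
  have hex : ∃ j ≤ c, S j = S (j + 1) := by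
    by_contra hcon
    push_neg at hcon
    have hstrict : ∀ j ≤ c, S j ⊂ S (j + 1) :=
      fun j hj => (hmono j).ssubset_of_ne (hcon j hj)
    have hcard : ∀ j ≤ c + 1, j ≤ (S j).ncard := by
      intro j
      induction j with
      | zero => omega
      | succ k ih =>
        intro hk
        have h1 := ih (by omega)
        have h2 := Set.ncard_lt_ncard (hstrict k (by omega)) (Set.toFinite _)
        omega
    have h3 := hcard (c + 1) le_rfl
    have h4 : (S (c + 1)).ncard ≤ c := by
      have := Set.ncard_le_ncard (Set.subset_univ (S (c + 1))) (Set.toFinite _)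
      rwa [Set.ncard_univ] at this
    omega
  obtain ⟨j₀, hj₀, heq⟩ := hex
  have hconst : ∀ k, S (j₀ + k) = S j₀ := by
    intro k
    induction k with
    | zero => rfl
    | succ t ih =>
      have : j₀ + (t + 1) = (j₀ + t) + 1 := by ring
      rw [this, hstep, ih, ← hstep, ← heq]
  have e1 : S (c + 1) = S j₀ := by
    have := hconst (c + 1 - j₀); rwa [show j₀ + (c + 1 - j₀) = c + 1 by omega] at this
  have e2 : S (c + 2) = S j₀ := by
    have := hconst (c + 2 - j₀); rwa [show j₀ + (c + 2 - j₀) = c + 2 by omega] at this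
  have h5 : S (c + 2) = S (c + 1) := by rw [e1, e2]
  rw [hS] at h5
  simp only at h5
  rw [show m₀ + (c + 2) * ω = (m₀ + (c+1) * ω) + ω by ring] at h5
  exact h5

end Aux

theorem cosetGen_dagger_pow_subset {M : Type*} [CommMonoid M] [Finite M] :
    ∃ K : ℕ, 1 ≤ K ∧ ∀ n : ℕ, K ≤ n → ∀ R : Set M,
      (CosetGen (Dagger R)) ^ n ⊆ R ^ n := by
  obtain ⟨ω, hω, hid⟩ := exists_omega M
  refine ⟨Nat.card M * ω + (Nat.card M + 1) * ω + 1, by omega, fun n hn R x hx => ?_⟩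
  obtain ⟨d, hd⟩ := cosetGen_pow_mem hω hid n x hx
  have key : ∀ e : ℕ, R ^ (n + e * ω) = R ^ n := by
    intro e
    induction e with
    | zero => simp
    | succ t ih =>
      have h1 : n + (t + 1) * ω = (n + t * ω) + ω := by ring
      rw [h1, pow_stab hω hid (by omega), ih]
  rw [← key d]
  exact hd
end
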